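/- arXiv:2506.18486 — 13 statements merged into one kernel-verified Lean document; each statement's English description precedes it below -/
import Mathlib

section
/- Let U be a triple system over a field of characteristic ≠ 2 with trilinear product xyz, satisfying [L(u,v),L(x,y)] = L(L(u,v)x, y) + ε L(x, L(v,u)y) for all u,v,x,y (where L(x,y)z = xyz and ε = ±1). Define S(x,y) = L(x,y) + εL(y,x). Then for all u,v, the operator S(u,v) is a derivation of the triple product, i.e. S(u,v)(xyz) = (S(u,v)x)yz + x(S(u,v)y)z + xy(S(u,v)z) for all x,y,z. -/
/-- In a triple system satisfying the `ε`-identity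
`[L(u,v),L(x,y)] = L(L(u,v)x, y) + ε L(x, L(v,u)y)`, the operators
`S(u,v) = L(u,v) + ε L(v,u)` are derivations of the triple product. -/
theorem S_is_derivation {K U : Type*} [Field K] [AddCommGroup U] [Module K U]
    (h2 : (2 : K) ≠ 0)
    (m : U →ₗ[K] U →ₗ[K] U →ₗ[K] U) (ε : K) (hε : ε = 1 ∨ ε = -1)
    (hFK1 : ∀ u v x y z : U,
      m u v (m x y z) - m x y (m u v z) = m (m u v x) y z + ε • m x (m v u y) z) :
    ∀ u v x y z : U,
      m u v (m x y z) + ε • m v u (m x y z)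
        = m (m u v x + ε • m v u x) y z
          + m x (m u v y + ε • m v u y) z
          + m x y (m u v z + ε • m v u z) := by
  intro u v x y z
  have h1 := hFK1 u v x y z
  have h2' := hFK1 v u x y z
  simp only [map_add, map_smul, LinearMap.add_apply, LinearMap.smul_apply]
  rcases hε with rfl | rfl
  · linear_combination (norm := module) h1 + (1:K) • h2'
  · linear_combination (norm := module) h1 + (-1:K) • h2'
end

section
/- Let U be a triple system over a field of characteristic ≠ 2 satisfying [L(u,v),L(x,y)] = L(L(u,v)x, y) + ε L(x, L(v,u)y) for all u,v,x,y, where ε = ±1. Define T(x,y) = L(y,x) − εL(x,y). Then T(u,v)(xyz) = (T(u,v)x)yz − x(T(u,v)y)z + xy(T(u,v)z) for all u,v,x,y,z ∈ U. -/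
/-- In a triple system satisfying the `ε`-identity
`[L(u,v),L(x,y)] = L(L(u,v)x, y) + ε L(x, L(v,u)y)`, the operators
`T(u,v) = L(v,u) − ε L(u,v)` satisfy
`T(u,v)(xyz) = (T(u,v)x)yz − x(T(u,v)y)z + xy(T(u,v)z)`. -/
theorem T_property {K U : Type*} [Field K] [AddCommGroup U] [Module K U]
    (h2 : (2 : K) ≠ 0)
    (m : U →ₗ[K] U →ₗ[K] U →ₗ[K] U) (ε : K) (hε : ε = 1 ∨ ε = -1)
    (hFK1 : ∀ u v x y z : U,
      m u v (m x y z) - m x y (m u v z) = m (m u v x) y z + ε • m x (m v u y) z) :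
    ∀ u v x y z : U,
      m v u (m x y z) - ε • m u v (m x y z)
        = m (m v u x - ε • m u v x) y z
          - m x (m v u y - ε • m u v y) z
          + m x y (m v u z - ε • m u v z) := by
  intro u v x y z
  have h1 := hFK1 u v x y z
  have h2' := hFK1 v u x y z
  simp only [map_sub, map_smul, LinearMap.sub_apply, LinearMap.smul_apply]
  rcases hε with rfl | rfl <;>
    [linear_combination (norm := module) h2' - h1;
     linear_combination (norm := module) h2' + h1]
end

section
/- Let U be a triple system satisfying [L(u,v),L(x,y)] = L(L(u,v)x, y) + ε L(x, L(v,u)y), with S(x,y) = L(x,y) + εL(y,x) and T(x,y) = L(y,x) − εL(x,y). Then [T(u,v), T(x,y)] = −ε S(T(u,v)x, y) + ε S(x, T(u,v)y) for all u,v,x,y ∈ U. -/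
/-- The operator `T(x,y) = L(y,x) − ε L(x,y)` applied to `z`. -/
def TOper {K U : Type*} [Field K] [AddCommGroup U] [Module K U]
    (m : U →ₗ[K] U →ₗ[K] U →ₗ[K] U) (ε : K) (x y z : U) : U :=
  m y x z - ε • m x y z

/-- The operator `S(x,y) = L(x,y) + ε L(y,x)` applied to `z`. -/
def SOper {K U : Type*} [Field K] [AddCommGroup U] [Module K U]
    (m : U →ₗ[K] U →ₗ[K] U →ₗ[K] U) (ε : K) (x y z : U) : U :=
  m x y z + ε • m y x z

/-- `[T(u,v), T(x,y)] = −ε S(T(u,v)x, y) + ε S(x, T(u,v)y)`. -/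
theorem TT_bracket {K U : Type*} [Field K] [AddCommGroup U] [Module K U]
    (h2 : (2 : K) ≠ 0)
    (m : U →ₗ[K] U →ₗ[K] U →ₗ[K] U) (ε : K) (hε : ε = 1 ∨ ε = -1)
    (hFK1 : ∀ u v x y z : U,
      m u v (m x y z) - m x y (m u v z) = m (m u v x) y z + ε • m x (m v u y) z) :
    ∀ u v x y w : U,
      TOper m ε u v (TOper m ε x y w) - TOper m ε x y (TOper m ε u v w)
        = -ε • SOper m ε (TOper m ε u v x) y w + ε • SOper m ε x (TOper m ε u v y) w := by
  intro u v x y w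
  have h1 := hFK1 v u y x w
  have h2' := hFK1 v u x y w
  have h3 := hFK1 u v y x w
  have h4 := hFK1 u v x y w
  simp only [TOper, SOper, map_sub, map_smul, LinearMap.sub_apply, LinearMap.smul_apply]
  rcases hε with rfl | rfl
  · simp only [one_smul, neg_smul, neg_neg, neg_one_smul, sub_neg_eq_add, smul_neg] at *
    linear_combination (norm := module) h1 - h2' - h3 + h4
  · simp only [one_smul, neg_smul, neg_neg, neg_one_smul, sub_neg_eq_add, smul_neg] at *
    linear_combination (norm := module) h1 + h2' + h3 + h4
end

section
/- Let (A,*) be a unital associative algebra with involution over a field of characteristic ≠ 2, T a left A-module, and h: T × T → A a skew-hermitian form (h(y,x) = −h(x,y)* and h(ax,y) = a·h(x,y)). Then the triple product ⟨x,y,z⟩ = h(x,y)z + h(z,x)y + h(z,y)x makes T a J-ternary algebra, i.e. it satisfies xy(uvz) = (xyu)vz + u(yxv)z + uv(xyz) and xyz − zyx = zxy − xzy. -/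
/-- The prototypical triple product `⟨x,y,z⟩ = h(x,y)z + h(z,x)y + h(z,y)x`. -/
def protoTriple {A T : Type*} [Ring A] [AddCommGroup T] [Module A T]
    (h : T → T → A) (x y z : T) : T :=
  h x y • z + h z x • y + h z y • x

/-- for a unital associative algebra with involution `(A, *)`,
a left `A`-module `T` and a skew-hermitian form `h : T × T → A`, the triple
product `⟨x,y,z⟩ = h(x,y)z + h(z,x)y + h(z,y)x` makes `T` a J-ternary algebra. -/
theorem prototypical_is_Jternary {K A T : Type*} [Field K]
    (h2 : (2 : K) ≠ 0)
    [Ring A] [StarRing A] [Algebra K A]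
    [AddCommGroup T] [Module A T] [Module K T] [IsScalarTower K A T]
    (h : T → T → A)
    (hadd1 : ∀ x y z : T, h (x + y) z = h x z + h y z)
    (hadd2 : ∀ x y z : T, h x (y + z) = h x y + h x z)
    (hlin : ∀ (a : A) (x y : T), h (a • x) y = a * h x y)
    (hskew : ∀ x y : T, h y x = - star (h x y)) :
    (∀ x y u v z : T,
      protoTriple h x y (protoTriple h u v z)
        = protoTriple h (protoTriple h x y u) v z
          + protoTriple h u (protoTriple h y x v) z
          + protoTriple h u v (protoTriple h x y z)) ∧
    (∀ x y z : T,
      protoTriple h x y z - protoTriple h z y x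
        = protoTriple h z x y - protoTriple h x z y) := by
  have hstar : ∀ x y : T, star (h x y) = - h y x := by
    intro x y
    rw [hskew x y, neg_neg]
  have hlin2 : ∀ (a : A) (x y : T), h x (a • y) = h x y * star a := by
    intro a x y
    rw [hskew (a • y) x, hlin, star_mul, hstar, neg_mul, neg_neg]
  constructor
  · intro x y u v z
    simp only [protoTriple, hadd1, hadd2, hlin, hlin2, hstar, smul_add, add_smul,
      mul_smul, neg_smul, smul_neg, mul_neg, neg_mul, neg_neg, neg_add_rev]
    abel
  · intro x y z
    simp only [protoTriple]
    abel
end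

section
/- Let (A,−) be a structurable algebra over a field of characteristic ≠ 2 and let s,t be skew-symmetric elements (s̄ = −s, t̄ = −t). Then L_s L_t = ½(V_{st,1} − V_{s,t}), where L_x denotes left multiplication by x. In particular L_s L_t lies in the span of the operators V_{a,b}. -/
/-- The operator `V_{a,b}` of an algebra with involution, applied to `c`:
`V_{a,b}(c) = (a b̄)c + (c b̄)a − (c ā)b`. -/
def Vop {A : Type*} [NonAssocRing A] (conj : A → A) (a b c : A) : A :=
  (a * conj b) * c + (c * conj b) * a - (c * conj a) * b

/-- in a structurable algebra, for skew elements `s`, `t`,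
`L_s L_t = ½ (V_{st,1} − V_{s,t})`; in particular `L_s L_t` lies in the span of
the operators `V_{a,b}`. -/
theorem LsLt_eq {K A : Type*} [Field K] (h2 : (2 : K) ≠ 0)
    [NonAssocRing A] [Module K A] [IsScalarTower K A A] [SMulCommClass K A A]
    (conj : A →ₗ[K] A)
    (hconj1 : conj 1 = 1)
    (hconj2 : ∀ a : A, conj (conj a) = a)
    (hconjm : ∀ a b : A, conj (a * b) = conj b * conj a)
    (hstr1 : ∀ a b c d x : A,
      Vop conj a b (Vop conj c d x) - Vop conj c d (Vop conj a b x)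
        = Vop conj (Vop conj a b c) d x - Vop conj c (Vop conj b a d) x)
    (hskalt : ∀ s x y : A, conj s = -s →
      (s * x) * y - s * (x * y) = -((x * s) * y - x * (s * y)))
    (s t : A) (hs : conj s = -s) (ht : conj t = -t) :
    (∀ x : A, s * (t * x) = (2 : K)⁻¹ • (Vop conj (s * t) 1 x - Vop conj s t x)) ∧
    (∃ (c₁ c₂ : K) (a₁ b₁ a₂ b₂ : A),
      ∀ x : A, s * (t * x) = c₁ • Vop conj a₁ b₁ x + c₂ • Vop conj a₂ b₂ x) := by
  have part1 : ∀ x : A, s * (t * x)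
      = (2 : K)⁻¹ • (Vop conj (s * t) 1 x - Vop conj s t x) := by
    intro x
    have e1 := hskalt s t x hs
    have e2 := hskalt s x t hs
    have e3 := hskalt t x s ht
    have e4 := hstr1 1 s 1 t x
    have main : (2 : K) • (s * (t * x))
        = Vop conj (s * t) 1 x - Vop conj s t x := by
      rw [two_smul]
      simp only [Vop, map_add, map_sub, map_neg, hconjm, hconj1, hs, ht,
        mul_one, one_mul, mul_neg, neg_mul, neg_neg, mul_add, add_mul, mul_sub,
        sub_mul, sub_neg_eq_add] at e4 ⊢
      linear_combination (norm := abel1) (-1 : ℤ) • e1 + (2 : ℤ) • e2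
        + (-2 : ℤ) • e3 + e4
    rw [← main, smul_smul, inv_mul_cancel₀ h2, one_smul]
  refine ⟨part1, (2 : K)⁻¹, -(2 : K)⁻¹, s * t, 1, s, t, fun x => ?_⟩
  rw [part1 x, smul_sub, sub_eq_add_neg, neg_smul]
end

section
/- Let (A,−) be a unital algebra with involution over a field of characteristic ≠ 2 that is skew-alternative, i.e. (s,x,y) = −(x,s,y) = (x,y,s) holds whenever s̄ = −s (for the associator (x,y,z) = (xy)z − x(yz)). If s is skew-symmetric and the left multiplication L_s is bijective, then the element t with st = 1 satisfies: t is skew-symmetric (t̄ = −t), ts = 1, and L_s L_t = L_t L_s = id. -/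
private lemma teich' {A : Type*} [NonAssocRing A] (w x y z : A) :
    (((w*x)*y)*z - (w*x)*(y*z)) - ((w*(x*y))*z - w*((x*y)*z)) + ((w*x)*(y*z) - w*(x*(y*z)))
      = w*((x*y)*z - x*(y*z)) + ((w*x)*y - w*(x*y))*z := by
  simp only [mul_sub, sub_mul]
  abel

/-- in a skew-alternative unital algebra with involution over a
field of characteristic ≠ 2, if `s` is skew-symmetric with `L_s` bijective and
`s t = 1`, then `t` is skew-symmetric, `t s = 1` and `L_s L_t = L_t L_s = id`. -/
theorem skew_inverse {K A : Type*} [Field K] (h2 : (2 : K) ≠ 0)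
    [NonAssocRing A] [Module K A] [IsScalarTower K A A] [SMulCommClass K A A]
    (conj : A →ₗ[K] A)
    (hconj1 : conj 1 = 1)
    (hconj2 : ∀ a : A, conj (conj a) = a)
    (hconjm : ∀ a b : A, conj (a * b) = conj b * conj a)
    (hskalt1 : ∀ s x y : A, conj s = -s →
      (s * x) * y - s * (x * y) = -((x * s) * y - x * (s * y)))
    (hskalt2 : ∀ s x y : A, conj s = -s →
      (x * y) * s - x * (y * s) = -((x * s) * y - x * (s * y)))
    (s t : A) (hs : conj s = -s)
    (hbij : Function.Bijective (fun x : A => s * x))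
    (hst : s * t = 1) :
    conj t = -t ∧ t * s = 1 ∧ (∀ x : A, s * (t * x) = x) ∧ (∀ x : A, t * (s * x) = x) := by
  have inj : ∀ {a b : A}, s * a = s * b → a = b := fun {a b} h => hbij.1 h
  have negswap : ∀ a b : A, a = -b → b = -a := fun a b h => by rw [h, neg_neg]
  have h2A : ∀ a : A, a + a = 0 → a = 0 := by
    intro a ha
    have h' : (2:K) • a = 0 := by rw [two_smul]; exact ha
    calc a = (2:K)⁻¹ • ((2:K) • a) := by
            rw [smul_smul, inv_mul_cancel₀ h2, one_smul]
      _ = 0 := by rw [h', smul_zero]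
  -- right alternativity in s : (x s) s = x (s s)
  have zss : ∀ x : A, (x*s)*s = x*(s*s) := by
    intro x
    have h := hskalt2 s x s hs
    have h0 : ((x*s)*s - x*(s*s)) + ((x*s)*s - x*(s*s)) = 0 := by
      nth_rewrite 2 [h]; exact add_neg_cancel _
    exact sub_eq_zero.mp (h2A _ h0)
  -- left alternativity in s : (s s) y = s (s y)
  have ssy : ∀ y : A, (s*s)*y = s*(s*y) := by
    intro y
    have h := hskalt1 s s y hs
    have h0 : ((s*s)*y - s*(s*y)) + ((s*s)*y - s*(s*y)) = 0 := by
      nth_rewrite 2 [h]; exact add_neg_cancel _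
    exact sub_eq_zero.mp (h2A _ h0)
  -- flexibility : (s x) s = s (x s)
  have flexs : ∀ x : A, (s*x)*s = s*(x*s) := by
    intro x
    have h := hskalt1 s x s hs
    have hz : (x*s)*s - x*(s*s) = 0 := sub_eq_zero.mpr (zss x)
    rw [hz, neg_zero] at h
    exact sub_eq_zero.mp h
  -- t s = 1
  have hts : t * s = 1 := by
    have h := hskalt1 s t s hs
    have hz : (t*s)*s - t*(s*s) = 0 := sub_eq_zero.mpr (zss t)
    rw [hz, neg_zero, hst, one_mul] at h
    have h9 : s * (t*s) = s * 1 := by rw [mul_one]; exact (sub_eq_zero.mp h).symm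
    exact inj h9
  -- conj t = -t
  have ht : conj t = -t := by
    have h1 := hconjm t s
    rw [hts, hconj1, hs, neg_mul] at h1
    have e1 : s * conj t = -(1:A) := negswap _ _ h1
    have e2 : s * (-t) = -(1:A) := by rw [mul_neg, hst]
    exact inj (e1.trans e2.symm)
  -- useful : t (s s) = s and (s s) t = s
  have tss : t*(s*s) = s := by rw [← zss t, hts, one_mul]
  have sst : (s*s)*t = s := by rw [ssy t, hst, mul_one]
  -- k1 : (t z) s - t (z s) = z - s (t z)
  have k1 : ∀ z : A, (t*z)*s - t*(z*s) = z - s*(t*z) := by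
    intro z
    have h1 := hskalt1 s t z hs
    have h2' := hskalt2 s t z hs
    rw [hst, one_mul] at h1
    exact h2'.trans h1.symm
  -- k2 : (z t) s - z = -(z - s (t z))
  have k2 : ∀ z : A, (z*t)*s - z = -(z - s*(t*z)) := by
    intro z
    have h3 := hskalt1 t z s ht
    rw [hts, mul_one] at h3
    rw [k1 z] at h3
    exact negswap _ _ h3
  -- k3 : (z s) t - z = z - s (t z)
  have k3 : ∀ z : A, (z*s)*t - z = z - s*(t*z) := by
    intro z
    have h4 := hskalt2 t z s ht
    rw [hst, hts, mul_one] at h4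
    rw [k2 z, neg_neg] at h4
    exact h4
  -- tb : f(z s) = s f(z) + f(z) s   where f(z) = z - s (t z)
  have tb : ∀ z : A, z*s - s*(t*(z*s)) = s*(z - s*(t*z)) + (z - s*(t*z))*s := by
    intro z
    have h := teich' s t z s
    rw [hst] at h
    simp only [one_mul] at h
    rw [flexs (t*z)] at h
    rw [k1 z] at h
    simp only [sub_self, sub_zero, zero_sub, zero_add, neg_zero] at h
    exact h
  -- tc : f(z s) = - f(z) s
  have tc : ∀ z : A, z*s - s*(t*(z*s)) = -((z - s*(t*z))*s) := by
    intro z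
    have h := teich' z s t s
    rw [hst, hts] at h
    simp only [one_mul, mul_one] at h
    simp only [sub_self, sub_zero, add_zero, mul_zero, zero_add] at h
    rw [k3 z] at h
    rw [k2 (z*s)] at h
    exact negswap _ _ h.symm
  -- w3 : (x s²) t - x s = - f(x) s
  have w3 : ∀ x : A, (x*(s*s))*t - x*s = -((x - s*(t*x))*s) := by
    intro x
    have e2 := k3 (x*s)
    rw [tc x] at e2
    rw [zss x] at e2
    exact e2
  -- w4 : (x t) s² - x s = - f(x) s
  have w4 : ∀ x : A, (x*t)*(s*s) - x*s = -((x - s*(t*x))*s) := by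
    intro x
    have e2 := congrArg (fun u => u * s) (k2 x)
    simp only [sub_mul] at e2
    rw [neg_mul] at e2
    rw [zss (x*t)] at e2
    exact e2
  -- f(x) s = 0
  have Fs0 : ∀ x : A, (x - s*(t*x))*s = 0 := by
    intro x
    have h5 := hskalt2 t x (s*s) ht
    rw [sst, tss] at h5
    rw [w3 x, w4 x, neg_neg] at h5
    have h6 : (x - s*(t*x))*s + (x - s*(t*x))*s = 0 := by
      nth_rewrite 1 [← h5]; exact neg_add_cancel _
    exact h2A _ h6
  -- f(z) = 0
  have key : ∀ z : A, z - s*(t*z) = 0 := by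
    intro z
    have h := tb z
    rw [tc z, Fs0 z] at h
    rw [neg_zero, add_zero] at h
    have h7 : s * (z - s*(t*z)) = s * 0 := by rw [mul_zero]; exact h.symm
    exact inj h7
  have stx : ∀ x : A, s * (t * x) = x := fun x => (sub_eq_zero.mp (key x)).symm
  have tsx : ∀ x : A, t * (s * x) = x := by
    intro x
    have h := hskalt1 s t x hs
    rw [hst, hts, one_mul, stx x, sub_self] at h
    have h8 : x - t*(s*x) = 0 := neg_eq_zero.mp h.symm
    exact (sub_eq_zero.mp h8).symm
  exact ⟨ht, hts, stx, tsx⟩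
end

section
/- Let (A,−) be a skew-alternative unital algebra with involution over a field of characteristic ≠ 2. Then for any skew-symmetric elements s, a and any x ∈ A, the Moufang-type identity L_a L_s L_a = L_{a(sa)} holds; consequently, for skew-symmetric a, b and s: L_a L_s L_b + L_b L_s L_a = L_{a(sb) + b(sa)}. -/
/-- The associator. -/
def ascr {A : Type*} [NonAssocRing A] (u v w : A) : A := (u * v) * w - u * (v * w)

/-- Teichmüller identity, valid in any non-associative ring. -/
lemma teich_ascr {A : Type*} [NonAssocRing A] (w x y z : A) :
    ascr (w * x) y z - ascr w (x * y) z + ascr w x (y * z)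
      = w * ascr x y z + ascr w x y * z := by
  simp only [ascr, mul_sub, sub_mul]
  abel

lemma moufang_aux {K A : Type*} [Field K] (h2 : (2 : K) ≠ 0)
    [NonAssocRing A] [Module K A]
    (conj : A →ₗ[K] A)
    (hskalt1 : ∀ s x y : A, conj s = -s →
      (s * x) * y - s * (x * y) = -((x * s) * y - x * (s * y)))
    (hskalt2 : ∀ s x y : A, conj s = -s →
      (x * y) * s - x * (y * s) = -((x * s) * y - x * (s * y)))
    (a s x : A) (ha : conj a = -a) (hs : conj s = -s) :
    a * (s * (a * x)) = (a * (s * a)) * x := by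
  have h2A : ∀ v : A, v + v = 0 → v = 0 := by
    intro v hv
    have h : (2 : K) • v = 0 := by rw [two_smul]; exact hv
    have h' := congrArg (fun w => (2 : K)⁻¹ • w) h
    simpa [smul_smul, inv_mul_cancel₀ h2] using h'
  have sw1 : ∀ t u v : A, conj t = -t → ascr t u v = -ascr u t v := hskalt1
  have sw2 : ∀ t u v : A, conj t = -t → ascr u v t = -ascr u t v := hskalt2
  have z1 : ∀ u : A, ascr a a u = 0 := by
    intro u
    refine h2A _ ?_
    nth_rewrite 1 [sw1 a a u ha]
    exact neg_add_cancel _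
  have z2 : ∀ u : A, ascr u a a = 0 := by
    intro u
    refine h2A _ ?_
    nth_rewrite 1 [sw2 a u a ha]
    exact neg_add_cancel _
  have z3 : ascr a s a = 0 := by rw [sw1 a s a ha, z2 s, neg_zero]
  have T1 := teich_ascr a s a x
  have T2 := teich_ascr s a a x
  have T3 := teich_ascr a a s x
  rw [z3, zero_mul, add_zero] at T1
  rw [z1 x, z2 s, mul_zero, zero_mul, add_zero] at T2
  rw [z1 (s * x), z1 s, zero_mul, add_zero, add_zero] at T3
  -- swaps
  have e2 : ascr s (a * a) x = -ascr (a * a) s x := sw1 s (a * a) x hs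
  have e3 : ascr a s (a * x) = -ascr s a (a * x) := sw1 a s (a * x) ha
  have e4 : ascr a (s * a) x = -ascr (s * a) a x := sw1 a (s * a) x ha
  have e1 : ascr a (a * s) x = -ascr (a * s) a x := sw1 a (a * s) x ha
  have e5 : ascr a s x = -ascr s a x := sw1 a s x ha
  rw [e4, e3] at T1
  rw [e2] at T2
  rw [e1, e5, mul_neg] at T3
  have h1 := sub_eq_zero_of_eq T1
  have h3 := sub_eq_zero_of_eq T3
  have hV : (ascr (s * a) a x - a * ascr s a x) + (ascr (s * a) a x - a * ascr s a x) = 0 := by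
    calc (ascr (s * a) a x - a * ascr s a x) + (ascr (s * a) a x - a * ascr s a x)
        = ((ascr (a * s) a x - -ascr (s * a) a x + -ascr s a (a * x)) - a * ascr s a x)
          + (ascr (s * a) a x - -ascr (a * a) s x + ascr s a (a * x))
          - ((ascr (a * a) s x - -ascr (a * s) a x) - -(a * ascr s a x)) := by abel
      _ = 0 := by rw [h1, T2, h3]; abel
  have key : ascr (s * a) a x = a * ascr s a x := sub_eq_zero.mp (h2A _ hV)
  have fin : (a * (s * a)) * x - a * (s * (a * x)) = ascr a (s * a) x + a * ascr s a x := by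
    simp only [ascr, mul_sub]
    abel
  rw [e4, key] at fin
  have fin0 : (a * (s * a)) * x - a * (s * (a * x)) = 0 := by
    rw [fin]; exact neg_add_cancel _
  exact (sub_eq_zero.mp fin0).symm

/-- the Moufang-type identity `L_a L_s L_a = L_{a(sa)}` for skew
elements `a`, `s` of a skew-alternative unital algebra with involution, and its
linearization `L_a L_s L_b + L_b L_s L_a = L_{a(sb) + b(sa)}`. -/
theorem moufang_skew {K A : Type*} [Field K] (h2 : (2 : K) ≠ 0)
    [NonAssocRing A] [Module K A] [IsScalarTower K A A] [SMulCommClass K A A]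
    (conj : A →ₗ[K] A)
    (hconj1 : conj 1 = 1)
    (hconj2 : ∀ a : A, conj (conj a) = a)
    (hconjm : ∀ a b : A, conj (a * b) = conj b * conj a)
    (hskalt1 : ∀ s x y : A, conj s = -s →
      (s * x) * y - s * (x * y) = -((x * s) * y - x * (s * y)))
    (hskalt2 : ∀ s x y : A, conj s = -s →
      (x * y) * s - x * (y * s) = -((x * s) * y - x * (s * y))) :
    (∀ a s x : A, conj a = -a → conj s = -s →
      a * (s * (a * x)) = (a * (s * a)) * x) ∧
    (∀ a b s x : A, conj a = -a → conj b = -b → conj s = -s →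
      a * (s * (b * x)) + b * (s * (a * x)) = (a * (s * b) + b * (s * a)) * x) := by
  have part1 : ∀ a s x : A, conj a = -a → conj s = -s →
      a * (s * (a * x)) = (a * (s * a)) * x :=
    fun a s x ha hs => moufang_aux h2 conj hskalt1 hskalt2 a s x ha hs
  refine ⟨part1, ?_⟩
  intro a b s x ha hb hs
  have hab : conj (a + b) = -(a + b) := by rw [map_add, ha, hb]; abel
  have H := part1 (a + b) s x hab hs
  have Ha := part1 a s x ha hs
  have Hb := part1 b s x hb hs
  have key : (a * (s * (b * x)) + b * (s * (a * x))) - (a * (s * b) + b * (s * a)) * x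
      = ((a + b) * (s * ((a + b) * x)) - ((a + b) * (s * (a + b))) * x)
        - (a * (s * (a * x)) - (a * (s * a)) * x)
        - (b * (s * (b * x)) - (b * (s * b)) * x) := by
    simp only [mul_add, add_mul]
    abel
  rw [sub_eq_zero_of_eq H, sub_eq_zero_of_eq Ha, sub_eq_zero_of_eq Hb] at key
  simp only [zero_sub, sub_zero, neg_zero] at key
  exact sub_eq_zero.mp key
end

section
/- Let L = L₋₂ ⊕ L₋₁ ⊕ L₀ ⊕ L₁ ⊕ L₂ be a 5-graded Lie algebra over a field of characteristic ≠ 2 with E ∈ L₂, F ∈ L₋₂ spanning with H = [E,F] a copy of sl₂ such that Lᵢ is the i-eigenspace of ad H. Then L₀ = Cent_L(sl₂) ⊕ [F, L₂], where Cent_L(sl₂) = {X ∈ L₀ : [F,X] = 0} = {X ∈ L₀ : [E,X] = 0}. -/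
/-- in a 5-graded Lie algebra with an `sl₂`-triple `E ∈ L₂`,
`F ∈ L₋₂`, `H = [E,F]`, where `Lᵢ` is the `i`-eigenspace of `ad H`, one has
`L₀ = Cent_L(sl₂) ⊕ [F, L₂]`, and
`Cent_L(sl₂) = {X ∈ L₀ : [F,X] = 0} = {X ∈ L₀ : [E,X] = 0}`. -/
theorem five_graded_L0_decomposition {K L : Type*} [Field K] (h2 : (2 : K) ≠ 0)
    [LieRing L] [LieAlgebra K L]
    (G : ℤ → Submodule K L) (E F H : L)
    (hE : E ∈ G 2) (hF : F ∈ G (-2)) (hH : H = ⁅E, F⁆)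
    (heig : ∀ (i : ℤ) (X : L), X ∈ G i ↔ ⁅H, X⁆ = (i : K) • X)
    (h5 : ∀ k : ℤ, 2 < |k| → G k = ⊥)
    (hsup : G (-2) ⊔ G (-1) ⊔ G 0 ⊔ G 1 ⊔ G 2 = ⊤) :
    -- the centralizer of `sl₂ = span{E,F,H}` equals `{X ∈ L₀ : [F,X]=0}`
    (∀ X : L, (⁅E, X⁆ = 0 ∧ ⁅F, X⁆ = 0 ∧ ⁅H, X⁆ = 0) ↔ (X ∈ G 0 ∧ ⁅F, X⁆ = 0)) ∧
    -- and equals `{X ∈ L₀ : [E,X]=0}`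
    (∀ X : L, (X ∈ G 0 ∧ ⁅F, X⁆ = 0) ↔ (X ∈ G 0 ∧ ⁅E, X⁆ = 0)) ∧
    -- decomposition `L₀ = Cent_L(sl₂) + [F, L₂]`
    (∀ X ∈ G 0, ∃ Y W : L, Y ∈ G 0 ∧ ⁅F, Y⁆ = 0 ∧ W ∈ G 2 ∧ X = Y + ⁅F, W⁆) ∧
    -- the sum is direct
    (∀ X : L, (X ∈ G 0 ∧ ⁅F, X⁆ = 0) → (∃ W ∈ G 2, X = ⁅F, W⁆) → X = 0) := by
  have hG4 : ∀ Z : L, Z ∈ G 4 → Z = 0 := by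
    intro Z hZ
    rw [h5 4 (by norm_num)] at hZ
    simpa using hZ
  have hGm4 : ∀ Z : L, Z ∈ G (-4) → Z = 0 := by
    intro Z hZ
    rw [h5 (-4) (by norm_num)] at hZ
    simpa using hZ
  have hHE : ⁅H, E⁆ = (2 : K) • E := by
    have := (heig 2 E).mp hE; simpa using this
  have hHF : ⁅H, F⁆ = -((2 : K) • F) := by
    have := (heig (-2) F).mp hF
    push_cast at this
    simpa [neg_smul] using this
  -- ad E raises degree by 2, ad F lowers by 2
  have adE : ∀ (i : ℤ) (X : L), X ∈ G i → ⁅E, X⁆ ∈ G (i + 2) := by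
    intro i X hX
    rw [heig] at hX ⊢
    have hleib : ⁅H, ⁅E, X⁆⁆ = ⁅⁅H, E⁆, X⁆ + ⁅E, ⁅H, X⁆⁆ := leibniz_lie H E X
    rw [hleib, hHE, hX]
    push_cast
    rw [smul_lie, lie_smul, add_smul]
    abel
  have adF : ∀ (i : ℤ) (X : L), X ∈ G i → ⁅F, X⁆ ∈ G (i - 2) := by
    intro i X hX
    rw [heig] at hX ⊢
    have hleib : ⁅H, ⁅F, X⁆⁆ = ⁅⁅H, F⁆, X⁆ + ⁅F, ⁅H, X⁆⁆ := leibniz_lie H F X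
    rw [hleib, hHF, hX]
    push_cast
    rw [neg_lie, smul_lie, lie_smul, sub_smul]
    abel
  -- a vector of nonzero weight killed by both E and F is zero
  have kill : ∀ (i : ℤ), ((i : K) ≠ 0) → ∀ Z : L, Z ∈ G i →
      ⁅E, Z⁆ = 0 → ⁅F, Z⁆ = 0 → Z = 0 := by
    intro i hi Z hZ hEZ hFZ
    have h1 : ⁅H, Z⁆ = (i : K) • Z := (heig i Z).mp hZ
    rw [hH, lie_lie, hEZ, hFZ] at h1
    simp only [lie_zero, sub_zero, zero_sub, neg_zero] at h1
    rcases smul_eq_zero.mp h1.symm with h | h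
    · exact absurd h hi
    · exact h
  have hm2 : ((-2 : ℤ) : K) ≠ 0 := by push_cast; exact neg_ne_zero.mpr h2
  have hp2 : ((2 : ℤ) : K) ≠ 0 := by push_cast; exact h2
  -- members of G 0 are killed by ad H
  have hG0 : ∀ X : L, X ∈ G 0 → ⁅H, X⁆ = 0 := by
    intro X hX
    have := (heig 0 X).mp hX; simpa using this
  -- for W ∈ G 2, ⁅E, ⁅F, W⁆⁆ = 2 • W
  have he2 : ∀ W : L, W ∈ G 2 → ⁅E, ⁅F, W⁆⁆ = (2 : K) • W := by
    intro W hW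
    have hEW : ⁅E, W⁆ = 0 := hG4 _ (adE 2 W hW)
    have hHW : ⁅H, W⁆ = (2 : K) • W := by
      have := (heig 2 W).mp hW; simpa using this
    calc ⁅E, ⁅F, W⁆⁆ = ⁅⁅E, F⁆, W⁆ + ⁅F, ⁅E, W⁆⁆ := leibniz_lie E F W
      _ = (2 : K) • W := by rw [hEW, lie_zero, add_zero, ← hH, hHW]
  -- X ∈ G 0, [F,X] = 0 → [E,X] = 0
  have dir1 : ∀ X : L, X ∈ G 0 → ⁅F, X⁆ = 0 → ⁅E, X⁆ = 0 := by
    intro X hX hFX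
    refine kill 2 hp2 _ (by simpa using adE 0 X hX) (hG4 _ ?_) ?_
    · have := adE 2 _ (by simpa using adE 0 X hX); simpa using this
    · calc ⁅F, ⁅E, X⁆⁆ = ⁅⁅F, E⁆, X⁆ + ⁅E, ⁅F, X⁆⁆ := leibniz_lie F E X
        _ = 0 := by
          have hFE : ⁅F, E⁆ = -H := by rw [hH, ← lie_skew E F, neg_neg]
          rw [hFX, lie_zero, add_zero, hFE, neg_lie, hG0 X hX, neg_zero]
  -- X ∈ G 0, [E,X] = 0 → [F,X] = 0
  have dir2 : ∀ X : L, X ∈ G 0 → ⁅E, X⁆ = 0 → ⁅F, X⁆ = 0 := by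
    intro X hX hEX
    refine kill (-2) hm2 _ (by simpa using adF 0 X hX) ?_ (hGm4 _ ?_)
    · calc ⁅E, ⁅F, X⁆⁆ = ⁅⁅E, F⁆, X⁆ + ⁅F, ⁅E, X⁆⁆ := leibniz_lie E F X
        _ = 0 := by rw [hEX, lie_zero, add_zero, ← hH, hG0 X hX]
    · have := adF (-2) _ (by simpa using adF 0 X hX); simpa using this
  refine ⟨?_, ?_, ?_, ?_⟩
  · -- centralizer = {X ∈ G 0 : [F,X] = 0}
    intro X
    constructor
    · rintro ⟨hEX, hFX, hHX⟩
      exact ⟨(heig 0 X).mpr (by simpa using hHX), hFX⟩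
    · rintro ⟨hX, hFX⟩
      exact ⟨dir1 X hX hFX, hFX, hG0 X hX⟩
  · -- {X ∈ G 0 : [F,X]=0} = {X ∈ G 0 : [E,X]=0}
    intro X
    exact ⟨fun ⟨hX, h⟩ => ⟨hX, dir1 X hX h⟩, fun ⟨hX, h⟩ => ⟨hX, dir2 X hX h⟩⟩
  · -- decomposition
    intro X hX
    set Z : L := ⁅E, X⁆ with hZdef
    have hZ : Z ∈ G 2 := by simpa using adE 0 X hX
    set W : L := (2 : K)⁻¹ • Z with hWdef
    have hW : W ∈ G 2 := Submodule.smul_mem _ _ hZ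
    have h2W : (2 : K) • W = Z := by
      rw [hWdef, smul_smul, mul_inv_cancel₀ h2, one_smul]
    have hFW : ⁅F, W⁆ ∈ G 0 := by simpa using adF 2 W hW
    refine ⟨X - ⁅F, W⁆, W, Submodule.sub_mem _ hX hFW, ?_, hW, by abel⟩
    apply dir2 _ (Submodule.sub_mem _ hX hFW)
    rw [lie_sub, he2 W hW, h2W, hZdef, sub_self]
  · -- directness
    rintro X ⟨hX, hFX⟩ ⟨W, hW, hXW⟩
    have hEX : ⁅E, X⁆ = 0 := dir1 X hX hFX
    rw [hXW, he2 W hW] at hEX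
    rcases smul_eq_zero.mp hEX with h | h
    · exact absurd h h2
    · rw [hXW, h, lie_zero]
end

section
/- Let L be a 5-graded Lie algebra over a field of characteristic ≠ 2 with E ∈ L₂, F ∈ L₋₂, H = [E,F] spanning sl₂ with Lᵢ the i-eigenspace of ad H, and suppose L₂ = [L₁,L₁] and L₀ = [L₁,L₋₁]. Then the centralizer of sl₂ in L is spanned by the elements [X,[F,Y]] + [Y,[F,X]] for X,Y ∈ L₁, and [F,L₂] is spanned by the elements [X,[F,Y]] − [Y,[F,X]] for X,Y ∈ L₁. -/
/-- in a 5-graded Lie algebra with an `sl₂`-triple `E ∈ L₂`,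
`F ∈ L₋₂`, `H = [E,F]`, where `Lᵢ` is the `i`-eigenspace of `ad H`, and with
`L₂ = [L₁,L₁]`, `L₀ = [L₁,L₋₁]`, the centralizer of `sl₂` is spanned by the
elements `[X,[F,Y]] + [Y,[F,X]]` (`X, Y ∈ L₁`), and `[F,L₂]` is spanned by the
elements `[X,[F,Y]] − [Y,[F,X]]` (`X, Y ∈ L₁`). -/
theorem five_graded_centralizer_span {K L : Type*} [Field K] (h2 : (2 : K) ≠ 0)
    [LieRing L] [LieAlgebra K L]
    (G : ℤ → Submodule K L) (E F H : L)
    (hE : E ∈ G 2) (hF : F ∈ G (-2)) (hH : H = ⁅E, F⁆)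
    (heig : ∀ (i : ℤ) (X : L), X ∈ G i ↔ ⁅H, X⁆ = (i : K) • X)
    (h5 : ∀ k : ℤ, 2 < |k| → G k = ⊥)
    (hsup : G (-2) ⊔ G (-1) ⊔ G 0 ⊔ G 1 ⊔ G 2 = ⊤)
    (hL2 : G 2 ≤ Submodule.span K {Z : L | ∃ X ∈ G 1, ∃ Y ∈ G 1, Z = ⁅X, Y⁆})
    (hL0 : G 0 ≤ Submodule.span K {Z : L | ∃ X ∈ G 1, ∃ Y ∈ G (-1), Z = ⁅X, Y⁆}) :
    ((Submodule.span K
        {Z : L | ∃ X ∈ G 1, ∃ Y ∈ G 1, Z = ⁅X, ⁅F, Y⁆⁆ + ⁅Y, ⁅F, X⁆⁆} : Set L)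
      = {X : L | ⁅E, X⁆ = 0 ∧ ⁅F, X⁆ = 0 ∧ ⁅H, X⁆ = 0}) ∧
    ((Submodule.span K
        {Z : L | ∃ X ∈ G 1, ∃ Y ∈ G 1, Z = ⁅X, ⁅F, Y⁆⁆ - ⁅Y, ⁅F, X⁆⁆} : Set L)
      = {Z : L | ∃ W ∈ G 2, Z = ⁅F, W⁆}) := by
  set SP := Submodule.span K
      {Z : L | ∃ X ∈ G 1, ∃ Y ∈ G 1, Z = ⁅X, ⁅F, Y⁆⁆ + ⁅Y, ⁅F, X⁆⁆} with hSPdef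
  set SM := Submodule.span K
      {Z : L | ∃ X ∈ G 1, ∃ Y ∈ G 1, Z = ⁅X, ⁅F, Y⁆⁆ - ⁅Y, ⁅F, X⁆⁆} with hSMdef
  -- grading is compatible with brackets
  have hbr : ∀ (a b : ℤ) (X Y : L), X ∈ G a → Y ∈ G b → ⁅X, Y⁆ ∈ G (a + b) := by
    intro a b X Y hX hY
    rw [heig] at hX hY ⊢
    rw [leibniz_lie, hX, hY, smul_lie, lie_smul]
    push_cast
    rw [add_smul]
  have hbot : ∀ (k : ℤ), 2 < |k| → ∀ X ∈ G k, X = 0 := by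
    intro k hk X hX
    rw [h5 k hk, Submodule.mem_bot] at hX
    exact hX
  have hEX1 : ∀ X ∈ G 1, ⁅E, X⁆ = 0 := fun X hX =>
    hbot 3 (by norm_num) _ (hbr 2 1 E X hE hX)
  have hEX2 : ∀ W ∈ G 2, ⁅E, W⁆ = 0 := fun W hW =>
    hbot 4 (by norm_num) _ (hbr 2 2 E W hE hW)
  have hFXm1 : ∀ X ∈ G (-1), ⁅F, X⁆ = 0 := fun X hX =>
    hbot (-3) (by norm_num) _ (hbr (-2) (-1) F X hF hX)
  have hFmem : ∀ X ∈ G 1, ⁅F, X⁆ ∈ G (-1) := fun X hX => by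
    have := hbr (-2) 1 F X hF hX; norm_num at this; exact this
  have hEmem : ∀ Y ∈ G (-1), ⁅E, Y⁆ ∈ G 1 := fun Y hY => by
    have := hbr 2 (-1) E Y hE hY; norm_num at this; exact this
  -- [E,[F,X]] = X for X ∈ G 1
  have hEFX : ∀ X ∈ G 1, ⁅E, ⁅F, X⁆⁆ = X := by
    intro X hX
    rw [leibniz_lie, ← hH, hEX1 X hX, lie_zero, add_zero, (heig 1 X).mp hX]
    push_cast; rw [one_smul]
  -- [F,[E,Y]] = Y for Y ∈ G (-1)
  have hFEY : ∀ Y ∈ G (-1), ⁅F, ⁅E, Y⁆⁆ = Y := by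
    intro Y hY
    have hFE : (⁅F, E⁆ : L) = -H := by rw [hH]; exact (lie_skew F E).symm
    rw [leibniz_lie, hFXm1 Y hY, lie_zero, add_zero, hFE, neg_lie, (heig (-1) Y).mp hY]
    push_cast; rw [neg_one_smul, neg_neg]
  -- [E,[F,W]] = 2 • W for W ∈ G 2
  have hEFW : ∀ W ∈ G 2, ⁅E, ⁅F, W⁆⁆ = (2 : K) • W := by
    intro W hW
    rw [leibniz_lie, ← hH, hEX2 W hW, lie_zero, add_zero, (heig 2 W).mp hW]
    norm_num
  -- antisymmetric combination is [F,[X,Y]]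
  have hQ : ∀ X Y : L, ⁅F, ⁅X, Y⁆⁆ = ⁅X, ⁅F, Y⁆⁆ - ⁅Y, ⁅F, X⁆⁆ := by
    intro X Y
    rw [leibniz_lie, ← lie_skew Y ⁅F, X⁆, sub_neg_eq_add, add_comm]
  -- second statement
  have part2 : (SM : Set L) = {Z : L | ∃ W ∈ G 2, Z = ⁅F, W⁆} := by
    ext Z
    constructor
    · intro hZ
      induction hZ using Submodule.span_induction with
      | mem z hz =>
        obtain ⟨X, hX, Y, hY, rfl⟩ := hz
        exact ⟨⁅X, Y⁆, hbr 1 1 X Y hX hY, (hQ X Y).symm⟩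
      | zero => exact ⟨0, (G 2).zero_mem, by simp⟩
      | add x y hx hy ihx ihy =>
        obtain ⟨W1, hW1, rfl⟩ := ihx
        obtain ⟨W2, hW2, rfl⟩ := ihy
        exact ⟨W1 + W2, (G 2).add_mem hW1 hW2, by rw [lie_add]⟩
      | smul a x hx ihx =>
        obtain ⟨W, hW, rfl⟩ := ihx
        exact ⟨a • W, (G 2).smul_mem a hW, by rw [lie_smul]⟩
    · rintro ⟨W, hW, rfl⟩
      have hW' := hL2 hW
      clear hW
      induction hW' using Submodule.span_induction with
      | mem z hz =>
        obtain ⟨X, hX, Y, hY, rfl⟩ := hz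
        rw [hQ X Y]
        exact Submodule.subset_span ⟨X, hX, Y, hY, rfl⟩
      | zero => simpa using SM.zero_mem
      | add x y hx hy ihx ihy => rw [lie_add]; exact SM.add_mem ihx ihy
      | smul a x hx ihx => rw [lie_smul]; exact SM.smul_mem a ihx
  -- SP is contained in the centralizer
  have hSPcent : ∀ z ∈ SP, ⁅E, z⁆ = 0 ∧ ⁅F, z⁆ = 0 ∧ ⁅H, z⁆ = 0 := by
    intro z hz
    induction hz using Submodule.span_induction with
    | mem z hz =>
      obtain ⟨X, hX, Y, hY, rfl⟩ := hz
      refine ⟨?_, ?_, ?_⟩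
      · rw [lie_add, leibniz_lie E X, leibniz_lie E Y, hEX1 X hX, hEX1 Y hY,
          zero_lie, zero_lie, hEFX X hX, hEFX Y hY, ← lie_skew X Y]
        abel
      · have h1 : ⁅F, ⁅F, Y⁆⁆ = 0 := hFXm1 _ (hFmem Y hY)
        have h2 : ⁅F, ⁅F, X⁆⁆ = 0 := hFXm1 _ (hFmem X hX)
        rw [lie_add, leibniz_lie F X, leibniz_lie F Y, h1, h2, lie_zero, lie_zero,
          add_zero, add_zero, ← lie_skew ⁅F, Y⁆ ⁅F, X⁆]
        abel
      · have hm : ⁅X, ⁅F, Y⁆⁆ + ⁅Y, ⁅F, X⁆⁆ ∈ G 0 := by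
          have h1 := hbr 1 (-1) X ⁅F, Y⁆ hX (hFmem Y hY)
          have h2 := hbr 1 (-1) Y ⁅F, X⁆ hY (hFmem X hX)
          norm_num at h1 h2
          exact (G 0).add_mem h1 h2
        rw [(heig 0 _).mp hm]
        norm_num
    | zero => simp
    | add x y hx hy ihx ihy =>
      refine ⟨?_, ?_, ?_⟩ <;> rw [lie_add] <;>
        simp [ihx.1, ihx.2.1, ihx.2.2, ihy.1, ihy.2.1, ihy.2.2]
    | smul a x hx ihx =>
      refine ⟨?_, ?_, ?_⟩ <;> rw [lie_smul] <;>
        simp [ihx.1, ihx.2.1, ihx.2.2]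
  refine ⟨?_, part2⟩
  ext C
  constructor
  · exact hSPcent C
  · rintro ⟨hCE, hCF, hCH⟩
    have hC0 : C ∈ G 0 := by
      rw [heig]; push_cast; rw [zero_smul]; exact hCH
    have hCs : C ∈ SP ⊔ SM := by
      refine Submodule.span_le.mpr ?_ (hL0 hC0)
      rintro z ⟨X, hX, Y', hY', rfl⟩
      set Y := ⁅E, Y'⁆ with hYdef
      have hY : Y ∈ G 1 := hEmem Y' hY'
      have hY'eq : Y' = ⁅F, Y⁆ := (hFEY Y' hY').symm
      have key : ⁅X, Y'⁆ = (2⁻¹ : K) • ((⁅X, ⁅F, Y⁆⁆ + ⁅Y, ⁅F, X⁆⁆) +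
          (⁅X, ⁅F, Y⁆⁆ - ⁅Y, ⁅F, X⁆⁆)) := by
        rw [hY'eq]
        rw [add_add_sub_cancel, ← two_smul K, smul_smul, inv_mul_cancel₀ h2, one_smul]
      rw [key]
      refine Submodule.smul_mem _ _ (Submodule.add_mem _ ?_ ?_)
      · exact Submodule.mem_sup_left (Submodule.subset_span ⟨X, hX, Y, hY, rfl⟩)
      · exact Submodule.mem_sup_right (Submodule.subset_span ⟨X, hX, Y, hY, rfl⟩)
    obtain ⟨p, hp, q, hq, hpq⟩ := Submodule.mem_sup.mp hCs
    have hEq : ⁅E, q⁆ = 0 := by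
      have hEp := (hSPcent p hp).1
      have : ⁅E, C⁆ = ⁅E, p⁆ + ⁅E, q⁆ := by rw [← hpq, lie_add]
      rw [hCE, hEp, zero_add] at this
      exact this.symm
    have hq0 : q = 0 := by
      have hqm : q ∈ (SM : Set L) := hq
      rw [part2] at hqm
      obtain ⟨W, hW, rfl⟩ := hqm
      have := hEFW W hW
      rw [hEq] at this
      have hW0 : W = 0 := by
        have := this.symm
        rcases smul_eq_zero.mp this with h | h
        · exact absurd h h2
        · exact h
      rw [hW0, lie_zero]
    rw [← hpq, hq0, add_zero]
    exact hp
end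

section
/- Let C₁ be an octonion (Cayley) algebra and C₂ a unital composition algebra over a field of characteristic ≠ 2, with A = C₁ ⊗ C₂ equipped with the tensor product of canonical involutions. Let S = S₁⊕S₂ be the space of skew elements (trace-zero elements of C₁ and C₂), Q(s₁+s₂) = n₁(s₁) − n₂(s₂) the Albert form, and (s₁+s₂)^♯ = s₁ − s₂. Then for any a ∈ S, L_a L_{a^♯} = L_{a^♯} L_a = −Q(a)·id on A. -/
open scoped TensorProduct

open QuadraticMap in
/-- In a composition algebra with nondegenerate polar form, a trace-zero
element `s` satisfies `s * (s * y) = -(n s) • y` for all `y`. -/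
lemma comp_traceless_sq_smul {K C : Type*} [Field K] [NonAssocRing C] [Module K C]
    [IsScalarTower K C C] [SMulCommClass K C C]
    (n : QuadraticForm K C)
    (hm : ∀ x y : C, n (x * y) = n x * n y)
    (hnd : (QuadraticMap.polarBilin n).Nondegenerate)
    (s : C) (hs : QuadraticMap.polar (⇑n) s 1 = 0) :
    ∀ y : C, s * (s * y) = -(n s) • y := by
  -- linearization in the first factor
  have hA : ∀ x w y : C, polar (⇑n) (x * y) (w * y) = polar (⇑n) x w * n y := by
    intro x w y
    simp only [QuadraticMap.polar]
    rw [← add_mul, hm, hm, hm]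
    ring
  -- linearization in the second factor
  have hD : ∀ x y z : C, polar (⇑n) (x * y) (x * z) = n x * polar (⇑n) y z := by
    intro x y z
    simp only [QuadraticMap.polar]
    rw [← mul_add, hm, hm, hm]
    ring
  -- full linearization
  have hB : ∀ x w y z : C,
      polar (⇑n) (x * y) (w * z) + polar (⇑n) (x * z) (w * y)
        = polar (⇑n) x w * polar (⇑n) y z := by
    intro x w y z
    have h1 := hA x w (y + z)
    rw [mul_add, mul_add, polar_add_left, polar_add_right, polar_add_right] at h1
    have hn : n (y + z) = polar (⇑n) y z + n y + n z := by
      simp only [QuadraticMap.polar]; ring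
    rw [hn] at h1
    have h2 := hA x w y
    have h3 := hA x w z
    linear_combination h1 - h2 - h3
  -- skew-adjointness of left multiplication by a traceless element
  have hC : ∀ y z : C, polar (⇑n) (s * y) z = - polar (⇑n) (s * z) y := by
    intro y z
    have h := hB s 1 y z
    rw [one_mul, one_mul, hs, zero_mul] at h
    linear_combination h
  intro y
  have key : ∀ z : C, polar (⇑n) (s * (s * y) + n s • y) z = 0 := by
    intro z
    rw [polar_add_left, polar_smul_left]
    have h1 := hC (s * y) z
    have h2 := hD s z y
    rw [h1, h2, polar_comm]
    simp [smul_eq_mul]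
  have h0 : s * (s * y) + n s • y = 0 := by
    apply hnd.1
    intro z
    simpa using key z
  have := add_eq_zero_iff_eq_neg.mp h0
  rw [this, neg_smul]

open TensorProduct in
/-- in `A = C₁ ⊗ C₂` (`C₁` an octonion algebra, `C₂` a unital
composition algebra) with the tensor product involution, for any skew element
`a = s₁ ⊗ 1 + 1 ⊗ s₂` (with `s₁`, `s₂` trace-zero) one has
`L_a L_{a♯} = L_{a♯} L_a = −Q(a)·id`, where `Q(s₁+s₂) = n₁(s₁) − n₂(s₂)` is the
Albert form and `(s₁+s₂)♯ = s₁ − s₂`. -/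
theorem albert_LaLasharp {K C₁ C₂ : Type*} [Field K] (h2 : (2 : K) ≠ 0)
    [NonAssocRing C₁] [Module K C₁] [IsScalarTower K C₁ C₁] [SMulCommClass K C₁ C₁]
    [NonAssocRing C₂] [Module K C₂] [IsScalarTower K C₂ C₂] [SMulCommClass K C₂ C₂]
    (n₁ : QuadraticForm K C₁) (n₂ : QuadraticForm K C₂)
    -- `C₁`, `C₂` are composition algebras:
    (hm₁ : ∀ x y : C₁, n₁ (x * y) = n₁ x * n₁ y)
    (hm₂ : ∀ x y : C₂, n₂ (x * y) = n₂ x * n₂ y)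
    (hnd₁ : (QuadraticMap.polarBilin n₁).Nondegenerate)
    (hnd₂ : (QuadraticMap.polarBilin n₂).Nondegenerate)
    -- `C₁` is a Cayley (octonion) algebra:
    (hdim : Module.finrank K C₁ = 8)
    -- a skew element of `A = C₁ ⊗ C₂`, i.e. `s₁`, `s₂` have trace zero:
    (s₁ : C₁) (s₂ : C₂)
    (hs₁ : QuadraticMap.polar (⇑n₁) s₁ 1 = 0)
    (hs₂ : QuadraticMap.polar (⇑n₂) s₂ 1 = 0) :
    (∀ x : C₁ ⊗[K] C₂,
      (s₁ ⊗ₜ[K] (1 : C₂) + (1 : C₁) ⊗ₜ[K] s₂) *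
        ((s₁ ⊗ₜ[K] (1 : C₂) - (1 : C₁) ⊗ₜ[K] s₂) * x) = -(n₁ s₁ - n₂ s₂) • x) ∧
    (∀ x : C₁ ⊗[K] C₂,
      (s₁ ⊗ₜ[K] (1 : C₂) - (1 : C₁) ⊗ₜ[K] s₂) *
        ((s₁ ⊗ₜ[K] (1 : C₂) + (1 : C₁) ⊗ₜ[K] s₂) * x) = -(n₁ s₁ - n₂ s₂) • x) := by
  have h₁ := comp_traceless_sq_smul n₁ hm₁ hnd₁ s₁ hs₁
  have h₂ := comp_traceless_sq_smul n₂ hm₂ hnd₂ s₂ hs₂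
  constructor
  · intro x
    induction x using TensorProduct.induction_on with
    | zero => simp
    | tmul c d =>
      simp only [sub_mul, mul_sub, add_mul, mul_add, Algebra.TensorProduct.tmul_mul_tmul,
        one_mul, mul_one, h₁ c, h₂ d]
      rw [TensorProduct.tmul_smul, ← TensorProduct.smul_tmul']
      module
    | add u v hu hv =>
      rw [mul_add, mul_add, hu, hv, smul_add]
  · intro x
    induction x using TensorProduct.induction_on with
    | zero => simp
    | tmul c d =>
      simp only [sub_mul, mul_sub, add_mul, mul_add, Algebra.TensorProduct.tmul_mul_tmul,
        one_mul, mul_one, h₁ c, h₂ d]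
      rw [TensorProduct.tmul_smul, ← TensorProduct.smul_tmul']
      module
    | add u v hu hv =>
      rw [mul_add, mul_add, hu, hv, smul_add]
end

section
/- With A = C₁ ⊗ C₂ (C₁ octonion, C₂ a unital composition algebra, characteristic ≠ 2), Albert form Q and sharp map ♯ on the skew elements S as above, the identity a b^♯ a = Q(a)b − Q(a,b)a holds for all a,b ∈ S, where Q(a,b) = Q(a+b) − Q(a) − Q(b) is the polar form. (The products a b^♯ a need no parentheses by skew-alternativity.) -/
open scoped TensorProduct

open QuadraticMap

section comp
set_option linter.unusedSectionVars false
variable {K C : Type*} [Field K] [NonAssocRing C] [Module K C]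
  [IsScalarTower K C C] [SMulCommClass K C C]

theorem comp_lin1 (n : QuadraticForm K C) (hm : ∀ x y : C, n (x * y) = n x * n y)
    (x z y : C) : polar (⇑n) (x * y) (z * y) = polar (⇑n) x z * n y := by
  simp only [QuadraticMap.polar, ← add_mul, hm]; ring

theorem comp_lin2 (n : QuadraticForm K C) (hm : ∀ x y : C, n (x * y) = n x * n y)
    (x y z w : C) :
    polar (⇑n) (x * y) (z * w) + polar (⇑n) (x * w) (z * y)
      = polar (⇑n) x z * polar (⇑n) y w := by
  have h := comp_lin1 n hm x z (y + w)
  have hn : n (y + w) = n y + n w + polar (⇑n) y w := by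
    simp only [QuadraticMap.polar]; ring
  rw [mul_add, mul_add, polar_add_left, polar_add_right, polar_add_right, hn] at h
  have h1 := comp_lin1 n hm x z y
  have h2 := comp_lin1 n hm x z w
  linear_combination h - h1 - h2

theorem comp_peel_right (n : QuadraticForm K C) (hm : ∀ x y : C, n (x * y) = n x * n y)
    (x y z : C) :
    polar (⇑n) (x * y) z = polar (⇑n) x z * polar (⇑n) y 1 - polar (⇑n) x (z * y) := by
  have h := comp_lin2 n hm x y z 1
  rw [mul_one, mul_one] at h
  linear_combination h

theorem comp_peel_left (n : QuadraticForm K C) (hm : ∀ x y : C, n (x * y) = n x * n y)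
    (x y z : C) :
    polar (⇑n) (x * y) z = polar (⇑n) x 1 * polar (⇑n) y z - polar (⇑n) (x * z) y := by
  have h := comp_lin2 n hm x y 1 z
  rw [one_mul, one_mul] at h
  linear_combination h

theorem comp_eq_of_polar (n : QuadraticForm K C)
    (hnd : (QuadraticMap.polarBilin n).Nondegenerate) (u v : C)
    (h : ∀ z, polar (⇑n) u z = polar (⇑n) v z) : u = v := by
  rw [← sub_eq_zero]
  refine hnd.1 _ fun z => ?_
  simp only [polarBilin_apply_apply, polar_sub_left, h z, sub_self]

theorem comp_tr_mul (n : QuadraticForm K C) (hm : ∀ x y : C, n (x * y) = n x * n y)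
    (b z : C) (hb : polar (⇑n) b 1 = 0) :
    polar (⇑n) (b * z) 1 = - polar (⇑n) b z := by
  have h := comp_peel_right n hm b z 1
  rw [one_mul, hb, zero_mul, zero_sub] at h
  exact h

theorem comp_sq (n : QuadraticForm K C) (hm : ∀ x y : C, n (x * y) = n x * n y)
    (hnd : (QuadraticMap.polarBilin n).Nondegenerate)
    (a : C) (ha : polar (⇑n) a 1 = 0) : a * a = -(n a) • 1 := by
  refine comp_eq_of_polar n hnd _ _ fun z => ?_
  have h1 := comp_peel_right n hm a a z
  have h2 : polar (⇑n) a (z * a) = polar (⇑n) z 1 * n a := by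
    rw [polar_comm]
    have := comp_lin1 n hm z 1 a
    rw [one_mul] at this
    linear_combination this
  have hc := polar_comm (⇑n) z 1
  rw [h1, h2, ha, polar_smul_left]
  simp only [smul_eq_mul]
  linear_combination -(n a) * hc

theorem comp_one_zb (n : QuadraticForm K C) (hm : ∀ x y : C, n (x * y) = n x * n y)
    (b z : C) (hb : polar (⇑n) b 1 = 0) :
    polar (⇑n) 1 (z * b) = - polar (⇑n) b z := by
  have h := comp_peel_right n hm 1 b z
  rw [one_mul, hb, mul_zero, zero_sub] at h
  linear_combination h

theorem comp_anti (n : QuadraticForm K C) (hm : ∀ x y : C, n (x * y) = n x * n y)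
    (hnd : (QuadraticMap.polarBilin n).Nondegenerate)
    (a b : C) (ha : polar (⇑n) a 1 = 0) (hb : polar (⇑n) b 1 = 0) :
    a * b + b * a = -(polar (⇑n) a b) • 1 := by
  refine comp_eq_of_polar n hnd _ _ fun z => ?_
  have h1 := comp_peel_left n hm a b z
  rw [ha, zero_mul, zero_sub] at h1
  have h2 := comp_peel_left n hm b a z
  rw [hb, zero_mul, zero_sub] at h2
  have h3 := comp_lin2 n hm a z b 1
  rw [mul_one, mul_one] at h3
  rw [polar_add_left, h1, h2, polar_smul_left]
  simp only [smul_eq_mul]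
  linear_combination -h3 - polar_comm (⇑n) (b*z) a
    - polar (⇑n) a b * polar_comm (⇑n) z 1

theorem comp_aba (n : QuadraticForm K C) (hm : ∀ x y : C, n (x * y) = n x * n y)
    (hnd : (QuadraticMap.polarBilin n).Nondegenerate)
    (a b : C) (ha : polar (⇑n) a 1 = 0) (hb : polar (⇑n) b 1 = 0) :
    (a * b) * a = n a • b - polar (⇑n) a b • a := by
  refine comp_eq_of_polar n hnd _ _ fun z => ?_
  have h1 := comp_peel_right n hm (a*b) a z
  rw [ha, mul_zero, zero_sub] at h1
  have h2 := comp_lin2 n hm a b z a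
  have h3 : polar (⇑n) (a*a) (z*b) = n a * polar (⇑n) b z := by
    rw [comp_sq n hm hnd a ha, polar_smul_left, comp_one_zb n hm b z hb]
    simp only [smul_eq_mul]; ring
  rw [h3] at h2
  rw [polar_sub_left, polar_smul_left, polar_smul_left, h1]
  simp only [smul_eq_mul]
  linear_combination -h2 - polar (⇑n) a z * polar_comm (⇑n) b a

theorem comp_aba' (n : QuadraticForm K C) (hm : ∀ x y : C, n (x * y) = n x * n y)
    (hnd : (QuadraticMap.polarBilin n).Nondegenerate)
    (a b : C) (ha : polar (⇑n) a 1 = 0) (hb : polar (⇑n) b 1 = 0) :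
    a * (b * a) = n a • b - polar (⇑n) a b • a := by
  refine comp_eq_of_polar n hnd _ _ fun z => ?_
  have h1 := comp_peel_left n hm a (b*a) z
  rw [ha, zero_mul, zero_sub] at h1
  have h2 := comp_lin2 n hm a z b a
  have h3 : polar (⇑n) (a*a) (b*z) = n a * polar (⇑n) b z := by
    rw [comp_sq n hm hnd a ha, polar_smul_left, polar_comm (⇑n) 1 (b*z),
      comp_tr_mul n hm b z hb]
    simp only [smul_eq_mul]; ring
  rw [h3] at h2
  rw [polar_sub_left, polar_smul_left, polar_smul_left, h1]
  simp only [smul_eq_mul]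
  linear_combination -h2 - polar (⇑n) a b * polar_comm (⇑n) z a
end comp

open TensorProduct in
/-- in `A = C₁ ⊗ C₂` (`C₁` an octonion algebra, `C₂` a unital
composition algebra), for skew elements `a = a₁ ⊗ 1 + 1 ⊗ a₂`,
`b = b₁ ⊗ 1 + 1 ⊗ b₂` one has `a b♯ a = Q(a) b − Q(a,b) a` (with either
parenthesization), where `Q` is the Albert form, `♯` the sharp map, and
`Q(·,·)` the polar form of `Q`. -/
theorem albert_absharpa {K C₁ C₂ : Type*} [Field K] (h2 : (2 : K) ≠ 0)
    [NonAssocRing C₁] [Module K C₁] [IsScalarTower K C₁ C₁] [SMulCommClass K C₁ C₁]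
    [NonAssocRing C₂] [Module K C₂] [IsScalarTower K C₂ C₂] [SMulCommClass K C₂ C₂]
    (n₁ : QuadraticForm K C₁) (n₂ : QuadraticForm K C₂)
    (hm₁ : ∀ x y : C₁, n₁ (x * y) = n₁ x * n₁ y)
    (hm₂ : ∀ x y : C₂, n₂ (x * y) = n₂ x * n₂ y)
    (hnd₁ : (QuadraticMap.polarBilin n₁).Nondegenerate)
    (hnd₂ : (QuadraticMap.polarBilin n₂).Nondegenerate)
    (hdim : Module.finrank K C₁ = 8)
    (a₁ b₁ : C₁) (a₂ b₂ : C₂)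
    (ha₁ : QuadraticMap.polar (⇑n₁) a₁ 1 = 0)
    (ha₂ : QuadraticMap.polar (⇑n₂) a₂ 1 = 0)
    (hb₁ : QuadraticMap.polar (⇑n₁) b₁ 1 = 0)
    (hb₂ : QuadraticMap.polar (⇑n₂) b₂ 1 = 0) :
    -- with `a = a₁ ⊗ 1 + 1 ⊗ a₂`, `b♯ = b₁ ⊗ 1 − 1 ⊗ b₂`:
    ((a₁ ⊗ₜ[K] (1 : C₂) + (1 : C₁) ⊗ₜ[K] a₂) * (b₁ ⊗ₜ[K] (1 : C₂) - (1 : C₁) ⊗ₜ[K] b₂))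
        * (a₁ ⊗ₜ[K] (1 : C₂) + (1 : C₁) ⊗ₜ[K] a₂)
      = (n₁ a₁ - n₂ a₂) • (b₁ ⊗ₜ[K] (1 : C₂) + (1 : C₁) ⊗ₜ[K] b₂)
        - (QuadraticMap.polar (⇑n₁) a₁ b₁ - QuadraticMap.polar (⇑n₂) a₂ b₂) •
            (a₁ ⊗ₜ[K] (1 : C₂) + (1 : C₁) ⊗ₜ[K] a₂) ∧
    (a₁ ⊗ₜ[K] (1 : C₂) + (1 : C₁) ⊗ₜ[K] a₂)
        * ((b₁ ⊗ₜ[K] (1 : C₂) - (1 : C₁) ⊗ₜ[K] b₂) * (a₁ ⊗ₜ[K] (1 : C₂) + (1 : C₁) ⊗ₜ[K] a₂))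
      = (n₁ a₁ - n₂ a₂) • (b₁ ⊗ₜ[K] (1 : C₂) + (1 : C₁) ⊗ₜ[K] b₂)
        - (QuadraticMap.polar (⇑n₁) a₁ b₁ - QuadraticMap.polar (⇑n₂) a₂ b₂) •
            (a₁ ⊗ₜ[K] (1 : C₂) + (1 : C₁) ⊗ₜ[K] a₂) := by
  have hsa₁ := comp_sq n₁ hm₁ hnd₁ a₁ ha₁
  have hsa₂ := comp_sq n₂ hm₂ hnd₂ a₂ ha₂
  have hba₁ : b₁ * a₁ = -(polar (⇑n₁) a₁ b₁) • 1 - a₁ * b₁ := by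
    rw [← comp_anti n₁ hm₁ hnd₁ a₁ b₁ ha₁ hb₁]; abel
  have hba₂ : b₂ * a₂ = -(polar (⇑n₂) a₂ b₂) • 1 - a₂ * b₂ := by
    rw [← comp_anti n₂ hm₂ hnd₂ a₂ b₂ ha₂ hb₂]; abel
  have haba₁ := comp_aba n₁ hm₁ hnd₁ a₁ b₁ ha₁ hb₁
  have haba₂ := comp_aba n₂ hm₂ hnd₂ a₂ b₂ ha₂ hb₂
  have haba₁' := comp_aba' n₁ hm₁ hnd₁ a₁ b₁ ha₁ hb₁
  have haba₂' := comp_aba' n₂ hm₂ hnd₂ a₂ b₂ ha₂ hb₂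
  constructor
  · simp only [mul_add, add_mul, sub_mul, mul_sub, Algebra.TensorProduct.tmul_mul_tmul,
      mul_one, one_mul]
    rw [haba₁, haba₂, hsa₁, hsa₂, hba₁, hba₂]
    simp only [TensorProduct.tmul_sub, TensorProduct.sub_tmul, TensorProduct.tmul_add,
      TensorProduct.add_tmul, TensorProduct.tmul_neg, TensorProduct.neg_tmul,
      TensorProduct.tmul_smul, ← TensorProduct.smul_tmul']
    module
  · simp only [mul_add, add_mul, sub_mul, mul_sub, Algebra.TensorProduct.tmul_mul_tmul,
      mul_one, one_mul]
    rw [haba₁', haba₂', hsa₁, hsa₂, hba₁, hba₂]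
    simp only [TensorProduct.tmul_sub, TensorProduct.sub_tmul, TensorProduct.tmul_add,
      TensorProduct.add_tmul, TensorProduct.tmul_neg, TensorProduct.neg_tmul,
      TensorProduct.tmul_smul, ← TensorProduct.smul_tmul']
    module
end

section
/- With A = C₁ ⊗ C₂ as above and Albert form Q on the skew elements S, for all a,b ∈ S: (a b^♯)² + Q(a,b)(a b^♯) + Q(a)Q(b)·1 = 0 in A. -/
open QuadraticMap

section CompAlg

variable {K : Type*} [Field K] {C : Type*} [NonAssocRing C] [Module K C]
  [IsScalarTower K C C] [SMulCommClass K C C]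
  (n : QuadraticForm K C)

theorem ca_polar_mul_right (hm : ∀ x y : C, n (x * y) = n x * n y) (x y z : C) :
    polar (⇑n) (x * y) (x * z) = n x * polar (⇑n) y z := by
  simp only [polar, ← mul_add, hm]; ring

theorem ca_polar_mul_left (hm : ∀ x y : C, n (x * y) = n x * n y) (x y z : C) :
    polar (⇑n) (x * z) (y * z) = polar (⇑n) x y * n z := by
  simp only [polar, ← add_mul, hm]; ring

theorem ca_exchange (hm : ∀ x y : C, n (x * y) = n x * n y) (x y z w : C) :
    polar (⇑n) (x * y) (z * w) + polar (⇑n) (z * y) (x * w)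
      = polar (⇑n) x z * polar (⇑n) y w := by
  have h := ca_polar_mul_right n hm (x + z) y w
  simp only [add_mul, polar_add_left, polar_add_right] at h
  have hx := ca_polar_mul_right n hm x y w
  have hz := ca_polar_mul_right n hm z y w
  have hn : n (x + z) = n x + n z + polar (⇑n) x z := by
    simp only [polar]; ring
  rw [hx, hz, hn] at h
  linear_combination h

theorem ca_eq_of_polar (hnd : (QuadraticMap.polarBilin n).Nondegenerate) {v w : C}
    (h : ∀ u : C, polar (⇑n) v u = polar (⇑n) w u) : v = w := by
  have := hnd.1 (v - w) (fun u => by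
    have h2 : polarBilin n (v - w) u = polar (⇑n) v u - polar (⇑n) w u := by
      simp [polar_sub_left]
    rw [h2, h u, sub_self])
  exact sub_eq_zero.mp this

theorem ca_norm_one_or_triv (hm : ∀ x y : C, n (x * y) = n x * n y)
    (hnd : (QuadraticMap.polarBilin n).Nondegenerate) : n 1 = 1 ∨ ∀ x : C, x = 0 := by
  by_cases h : n 1 = 1
  · exact Or.inl h
  · right
    intro x
    apply hnd.1
    intro u
    have h1 := ca_polar_mul_right n hm 1 x u
    rw [one_mul, one_mul] at h1
    have he : polarBilin n x u = polar (⇑n) x u := rfl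
    rw [he]
    have hz : (1 - n 1) * polar (⇑n) x u = 0 := by linear_combination h1
    rcases mul_eq_zero.mp hz with h' | h'
    · exact absurd (by linear_combination -h') h
    · exact h'

/-- D-left -/
theorem ca_polar_mul_left_arg (hm : ∀ x y : C, n (x * y) = n x * n y) (x y z : C) :
    polar (⇑n) (x * y) z = polar (⇑n) y (polar (⇑n) x 1 • z - x * z) := by
  have h := ca_exchange n hm x y 1 z
  rw [one_mul, one_mul] at h
  rw [polar_sub_right, polar_smul_right, smul_eq_mul]
  linear_combination h

/-- D-right -/
theorem ca_polar_mul_right_arg (hm : ∀ x y : C, n (x * y) = n x * n y) (x y z : C) :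
    polar (⇑n) (x * y) z = polar (⇑n) x (polar (⇑n) y 1 • z - z * y) := by
  have h := ca_exchange n hm x y z 1
  rw [mul_one] at h
  rw [polar_sub_right, polar_smul_right, smul_eq_mul]
  rw [polar_comm (⇑n) (z * y) (x * 1), mul_one] at h
  linear_combination h

theorem ca_polar_one_one (h1 : n 1 = 1) : polar (⇑n) (1 : C) 1 = 2 := by
  have := polar_self n (1 : C)
  rw [h1] at this
  rw [this]; norm_num


section unital
variable (hm : ∀ x y : C, n (x * y) = n x * n y)
  (hnd : (QuadraticMap.polarBilin n).Nondegenerate)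
  (h1 : n 1 = 1)

include hm hnd h1

theorem ca_left_inv (x z : C) :
    (polar (⇑n) x 1 • (1 : C) - x) * (x * z) = n x • z := by
  apply ca_eq_of_polar n hnd
  intro u
  have hD := ca_polar_mul_left_arg n hm (polar (⇑n) x 1 • (1 : C) - x) (x * z) u
  have hconj : polar (⇑n) (polar (⇑n) x 1 • (1 : C) - x) 1 = polar (⇑n) x 1 := by
    rw [polar_sub_left, polar_smul_left, ca_polar_one_one n h1, smul_eq_mul]; ring
  rw [hconj] at hD
  have he : polar (⇑n) x 1 • u - (polar (⇑n) x 1 • (1 : C) - x) * u = x * u := by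
    rw [sub_mul, smul_mul_assoc, one_mul]; abel
  rw [he] at hD
  rw [hD, ca_polar_mul_right n hm x z u, polar_smul_left]
  rw [smul_eq_mul]

theorem ca_right_inv (y z : C) :
    (z * y) * (polar (⇑n) y 1 • (1 : C) - y) = n y • z := by
  apply ca_eq_of_polar n hnd
  intro u
  have hD := ca_polar_mul_right_arg n hm (z * y) (polar (⇑n) y 1 • (1 : C) - y) u
  have hconj : polar (⇑n) (polar (⇑n) y 1 • (1 : C) - y) 1 = polar (⇑n) y 1 := by
    rw [polar_sub_left, polar_smul_left, ca_polar_one_one n h1, smul_eq_mul]; ring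
  rw [hconj] at hD
  have he : polar (⇑n) y 1 • u - u * (polar (⇑n) y 1 • (1 : C) - y) = u * y := by
    rw [mul_sub, mul_smul_comm, mul_one]; abel
  rw [he] at hD
  rw [hD, ca_polar_mul_left n hm z u y, polar_smul_left]
  rw [smul_eq_mul]; ring

theorem ca_ch (x : C) : x * x = polar (⇑n) x 1 • x - n x • 1 := by
  have h := ca_left_inv n hm hnd h1 x 1
  rw [mul_one, sub_mul, smul_mul_assoc, one_mul] at h
  have : x * x = polar (⇑n) x 1 • x - n x • 1 := by
    rw [← h]; abel
  exact this

end unital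

section tracezero
variable (hm : ∀ x y : C, n (x * y) = n x * n y)
  (hnd : (QuadraticMap.polarBilin n).Nondegenerate)
  (h1 : n 1 = 1)

include hm hnd h1

theorem ca_xxz {x : C} (hx : polar (⇑n) x 1 = 0) (z : C) :
    x * (x * z) = -(n x • z) := by
  have h := ca_left_inv n hm hnd h1 x z
  rw [hx, zero_smul, zero_sub, neg_mul] at h
  rw [← h, neg_neg]

theorem ca_zyy {y : C} (hy : polar (⇑n) y 1 = 0) (z : C) :
    (z * y) * y = -(n y • z) := by
  have h := ca_right_inv n hm hnd h1 y z
  rw [hy, zero_smul, zero_sub, mul_neg] at h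
  rw [← h, neg_neg]

theorem ca_polarized_left {x y : C} (hx : polar (⇑n) x 1 = 0)
    (hy : polar (⇑n) y 1 = 0) (z : C) :
    x * (y * z) + y * (x * z) = -(polar (⇑n) x y • z) := by
  have hxy : polar (⇑n) (x + y) 1 = 0 := by
    rw [polar_add_left, hx, hy, add_zero]
  have h := ca_xxz n hm hnd h1 hxy z
  have hn : n (x + y) = n x + n y + polar (⇑n) x y := by
    simp only [polar]; ring
  rw [hn] at h
  simp only [add_mul, mul_add] at h
  rw [ca_xxz n hm hnd h1 hx z, ca_xxz n hm hnd h1 hy z] at h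
  linear_combination (norm := module) h

theorem ca_polarized_right {x y : C} (hx : polar (⇑n) x 1 = 0)
    (hy : polar (⇑n) y 1 = 0) (z : C) :
    (z * x) * y + (z * y) * x = -(polar (⇑n) x y • z) := by
  have hxy : polar (⇑n) (x + y) 1 = 0 := by
    rw [polar_add_left, hx, hy, add_zero]
  have h := ca_zyy n hm hnd h1 hxy z
  have hn : n (x + y) = n x + n y + polar (⇑n) x y := by
    simp only [polar]; ring
  rw [hn] at h
  simp only [mul_add, add_mul] at h
  rw [ca_zyy n hm hnd h1 hx z, ca_zyy n hm hnd h1 hy z] at h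
  linear_combination (norm := module) h

variable {x y : C}

theorem ca_sq (hx : polar (⇑n) x 1 = 0) : x * x = -(n x • 1) := by
  have h := ca_xxz n hm hnd h1 hx 1
  rw [mul_one] at h; exact h

theorem ca_anticomm (hx : polar (⇑n) x 1 = 0) (hy : polar (⇑n) y 1 = 0) : y * x = -(x * y) - polar (⇑n) x y • 1 := by
  have h := ca_polarized_left n hm hnd h1 hx hy 1
  rw [mul_one, mul_one] at h
  linear_combination (norm := module) h

theorem ca_xxy (hx : polar (⇑n) x 1 = 0) : x * (x * y) = -(n x • y) := ca_xxz n hm hnd h1 hx y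

theorem ca_xyy (hy : polar (⇑n) y 1 = 0) : (x * y) * y = -(n y • x) := ca_zyy n hm hnd h1 hy x

theorem ca_yxy (hx : polar (⇑n) x 1 = 0) (hy : polar (⇑n) y 1 = 0) : y * (x * y) = n y • x - polar (⇑n) x y • y := by
  have h := ca_polarized_left n hm hnd h1 hx hy y
  have e : x * (y * y) = -(n y • x) := by
    rw [ca_sq n hm hnd h1 hy, mul_neg, mul_smul_comm, mul_one]
  rw [e] at h
  linear_combination (norm := module) h

theorem ca_xyx (hx : polar (⇑n) x 1 = 0) (hy : polar (⇑n) y 1 = 0) :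
    (x * y) * x = n x • y - polar (⇑n) x y • x := by
  have h := ca_polarized_right n hm hnd h1 hx hy x
  have e : x * x * y = -(n x • y) := by
    rw [ca_sq n hm hnd h1 hx, neg_mul, smul_mul_assoc, one_mul]
  rw [e] at h
  linear_combination (norm := module) h

theorem ca_trace_mul (hy : polar (⇑n) y 1 = 0) : polar (⇑n) (x * y) 1 = -polar (⇑n) x y := by
  have h := ca_polar_mul_right_arg n hm x y 1
  rw [hy, zero_smul, one_mul, zero_sub, polar_neg_right] at h
  exact h

theorem ca_mulsq (hx : polar (⇑n) x 1 = 0) (hy : polar (⇑n) y 1 = 0) : (x * y) * (x * y)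
    = -(polar (⇑n) x y • (x * y)) - (n x * n y) • 1 := by
  have h := ca_ch n hm hnd h1 (x * y)
  rw [ca_trace_mul n hm hnd h1 hy, hm x y, neg_smul] at h
  linear_combination (norm := module) h

end tracezero

end CompAlg


open scoped TensorProduct

open TensorProduct in
/-- in `A = C₁ ⊗ C₂` (`C₁` an octonion algebra, `C₂` a unital
composition algebra), for skew elements `a`, `b` one has
`(a b♯)² + Q(a,b)(a b♯) + Q(a)Q(b)·1 = 0`, with `Q` the Albert form. -/
theorem albert_quadratic_absharp {K C₁ C₂ : Type*} [Field K] (h2 : (2 : K) ≠ 0)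
    [NonAssocRing C₁] [Module K C₁] [IsScalarTower K C₁ C₁] [SMulCommClass K C₁ C₁]
    [NonAssocRing C₂] [Module K C₂] [IsScalarTower K C₂ C₂] [SMulCommClass K C₂ C₂]
    (n₁ : QuadraticForm K C₁) (n₂ : QuadraticForm K C₂)
    (hm₁ : ∀ x y : C₁, n₁ (x * y) = n₁ x * n₁ y)
    (hm₂ : ∀ x y : C₂, n₂ (x * y) = n₂ x * n₂ y)
    (hnd₁ : (QuadraticMap.polarBilin n₁).Nondegenerate)
    (hnd₂ : (QuadraticMap.polarBilin n₂).Nondegenerate)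
    (hdim : Module.finrank K C₁ = 8)
    (a₁ b₁ : C₁) (a₂ b₂ : C₂)
    (ha₁ : QuadraticMap.polar (⇑n₁) a₁ 1 = 0)
    (ha₂ : QuadraticMap.polar (⇑n₂) a₂ 1 = 0)
    (hb₁ : QuadraticMap.polar (⇑n₁) b₁ 1 = 0)
    (hb₂ : QuadraticMap.polar (⇑n₂) b₂ 1 = 0) :
    -- with `a = a₁ ⊗ 1 + 1 ⊗ a₂`, `b♯ = b₁ ⊗ 1 − 1 ⊗ b₂`, `c = a * b♯`:
    ((a₁ ⊗ₜ[K] (1 : C₂) + (1 : C₁) ⊗ₜ[K] a₂) * (b₁ ⊗ₜ[K] (1 : C₂) - (1 : C₁) ⊗ₜ[K] b₂))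
        * ((a₁ ⊗ₜ[K] (1 : C₂) + (1 : C₁) ⊗ₜ[K] a₂) * (b₁ ⊗ₜ[K] (1 : C₂) - (1 : C₁) ⊗ₜ[K] b₂))
      + (QuadraticMap.polar (⇑n₁) a₁ b₁ - QuadraticMap.polar (⇑n₂) a₂ b₂) •
          ((a₁ ⊗ₜ[K] (1 : C₂) + (1 : C₁) ⊗ₜ[K] a₂) * (b₁ ⊗ₜ[K] (1 : C₂) - (1 : C₁) ⊗ₜ[K] b₂))
      + ((n₁ a₁ - n₂ a₂) * (n₁ b₁ - n₂ b₂)) • ((1 : C₁) ⊗ₜ[K] (1 : C₂))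
      = 0 := by
  rcases ca_norm_one_or_triv n₁ hm₁ hnd₁ with h₁ | htriv
  swap
  · have e : ∀ (x : C₁) (y : C₂), x ⊗ₜ[K] y = (0 : C₁ ⊗[K] C₂) := fun x y => by
      rw [htriv x, TensorProduct.zero_tmul]
    simp [e]
  rcases ca_norm_one_or_triv n₂ hm₂ hnd₂ with h₂ | htriv
  swap
  · have e : ∀ (x : C₁) (y : C₂), x ⊗ₜ[K] y = (0 : C₁ ⊗[K] C₂) := fun x y => by
      rw [htriv y, TensorProduct.tmul_zero]
    simp [e]
  have A1 : a₁ * a₁ = -(n₁ a₁ • 1) := ca_sq n₁ hm₁ hnd₁ h₁ ha₁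
  have A2 : b₁ * b₁ = -(n₁ b₁ • 1) := ca_sq n₁ hm₁ hnd₁ h₁ hb₁
  have A3 : b₁ * a₁ = -(a₁ * b₁) - QuadraticMap.polar (⇑n₁) a₁ b₁ • 1 :=
    ca_anticomm n₁ hm₁ hnd₁ h₁ ha₁ hb₁
  have A4 : a₁ * (a₁ * b₁) = -(n₁ a₁ • b₁) := ca_xxy n₁ hm₁ hnd₁ h₁ ha₁
  have A5 : (a₁ * b₁) * b₁ = -(n₁ b₁ • a₁) := ca_xyy n₁ hm₁ hnd₁ h₁ hb₁
  have A6 : b₁ * (a₁ * b₁) = n₁ b₁ • a₁ - QuadraticMap.polar (⇑n₁) a₁ b₁ • b₁ :=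
    ca_yxy n₁ hm₁ hnd₁ h₁ ha₁ hb₁
  have A7 : (a₁ * b₁) * a₁ = n₁ a₁ • b₁ - QuadraticMap.polar (⇑n₁) a₁ b₁ • a₁ :=
    ca_xyx n₁ hm₁ hnd₁ h₁ ha₁ hb₁
  have A8 : (a₁ * b₁) * (a₁ * b₁)
      = -(QuadraticMap.polar (⇑n₁) a₁ b₁ • (a₁ * b₁)) - (n₁ a₁ * n₁ b₁) • 1 :=
    ca_mulsq n₁ hm₁ hnd₁ h₁ ha₁ hb₁
  have B1 : a₂ * a₂ = -(n₂ a₂ • 1) := ca_sq n₂ hm₂ hnd₂ h₂ ha₂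
  have B2 : b₂ * b₂ = -(n₂ b₂ • 1) := ca_sq n₂ hm₂ hnd₂ h₂ hb₂
  have B3 : b₂ * a₂ = -(a₂ * b₂) - QuadraticMap.polar (⇑n₂) a₂ b₂ • 1 :=
    ca_anticomm n₂ hm₂ hnd₂ h₂ ha₂ hb₂
  have B4 : a₂ * (a₂ * b₂) = -(n₂ a₂ • b₂) := ca_xxy n₂ hm₂ hnd₂ h₂ ha₂
  have B5 : (a₂ * b₂) * b₂ = -(n₂ b₂ • a₂) := ca_xyy n₂ hm₂ hnd₂ h₂ hb₂
  have B6 : b₂ * (a₂ * b₂) = n₂ b₂ • a₂ - QuadraticMap.polar (⇑n₂) a₂ b₂ • b₂ :=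
    ca_yxy n₂ hm₂ hnd₂ h₂ ha₂ hb₂
  have B7 : (a₂ * b₂) * a₂ = n₂ a₂ • b₂ - QuadraticMap.polar (⇑n₂) a₂ b₂ • a₂ :=
    ca_xyx n₂ hm₂ hnd₂ h₂ ha₂ hb₂
  have B8 : (a₂ * b₂) * (a₂ * b₂)
      = -(QuadraticMap.polar (⇑n₂) a₂ b₂ • (a₂ * b₂)) - (n₂ a₂ * n₂ b₂) • 1 :=
    ca_mulsq n₂ hm₂ hnd₂ h₂ ha₂ hb₂
  simp only [mul_add, add_mul, mul_sub, sub_mul, Algebra.TensorProduct.tmul_mul_tmul,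
    one_mul, mul_one]
  simp only [A8, A7, A6, A5, A4, A3, A2, A1, B8, B7, B6, B5, B4, B3, B2, B1]
  simp only [TensorProduct.tmul_add, TensorProduct.add_tmul, TensorProduct.tmul_sub,
    TensorProduct.sub_tmul, TensorProduct.neg_tmul, TensorProduct.tmul_neg,
    ← TensorProduct.smul_tmul', TensorProduct.tmul_smul]
  module
end

section
/- Let g be a weak Lie superalgebra over a field of characteristic 3 (a Z/2-graded algebra satisfying super-anticommutativity and the super Jacobi identity). Then the subspace i = span{[[x,x],x] : x ∈ g₁} is an ideal of g contained in the odd part g₁, satisfying [g, i] = 0, and the quotient g/i is a Lie superalgebra (i.e. additionally satisfies [[x,x],x] = 0 for all odd x). -/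
/-- let `g = g₀ ⊕ g₁` be a weak Lie superalgebra over a field of
characteristic 3, given by bilinear brackets `b00 : g₀ × g₀ → g₀` (the bracket
`[a,b]` of even elements), `b01 : g₀ × g₁ → g₁` (the bracket `[a,x]`, with
`[x,a] = −[a,x]`) and `b11 : g₁ × g₁ → g₀` (the bracket of odd elements),
satisfying super-anticommutativity and the graded Jacobi identity.  Then the
subspace `i = span{[[x,x],x] : x ∈ g₁}` of `g₁` satisfies `[g, i] = 0` (hence it
is an ideal contained in the odd part), and the quotient `g/i` is a genuine Lie
superalgebra: `[[x,x],x] ∈ i` for every odd `x`. -/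
theorem weak_lie_superalgebra_ideal {K g0 g1 : Type*} [Field K] [CharP K 3]
    [AddCommGroup g0] [Module K g0] [AddCommGroup g1] [Module K g1]
    (b00 : g0 →ₗ[K] g0 →ₗ[K] g0)
    (b01 : g0 →ₗ[K] g1 →ₗ[K] g1)
    (b11 : g1 →ₗ[K] g1 →ₗ[K] g0)
    -- super-anticommutativity
    (hanti : ∀ a b : g0, b00 a b = - b00 b a)
    (hsymm : ∀ x y : g1, b11 x y = b11 y x)
    -- graded Jacobi identities
    (hJ000 : ∀ a b c : g0, b00 (b00 a b) c + b00 (b00 b c) a + b00 (b00 c a) b = 0)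
    (hJ001 : ∀ a b : g0, ∀ x : g1,
      b01 (b00 a b) x - b01 a (b01 b x) + b01 b (b01 a x) = 0)
    (hJ011 : ∀ a : g0, ∀ x y : g1,
      b11 (b01 a x) y - b00 a (b11 x y) + b11 (b01 a y) x = 0)
    (hJ111 : ∀ x y z : g1,
      b01 (b11 x y) z + b01 (b11 y z) x + b01 (b11 z x) y = 0) :
    -- `[g₀, i] = 0` (on the generators of `i`)
    (∀ a : g0, ∀ y : g1,
      y ∈ Submodule.span K {w : g1 | ∃ x : g1, w = b01 (b11 x x) x} → b01 a y = 0) ∧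
    -- `[g₁, i] = 0`
    (∀ z : g1, ∀ y : g1,
      y ∈ Submodule.span K {w : g1 | ∃ x : g1, w = b01 (b11 x x) x} → b11 z y = 0) ∧
    -- in the quotient `g/i` every odd element satisfies `[[x,x],x] = 0`
    (∀ x : g1,
      b01 (b11 x x) x ∈ Submodule.span K {w : g1 | ∃ x : g1, w = b01 (b11 x x) x}) := by
  -- key identities on generators
  have key0 : ∀ (a : g0) (x : g1), b01 a (b01 (b11 x x) x) = 0 := by
    intro a x
    have e1 := hJ001 a (b11 x x) x
    have e2 := hJ011 a x x
    have e3 := hJ111 x (b01 a x) x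
    rw [hsymm x (b01 a x)] at e3
    have e2' : b00 a (b11 x x) = b11 (b01 a x) x + b11 (b01 a x) x := by
      linear_combination (norm := module) -e2
    rw [e2', map_add, LinearMap.add_apply] at e1
    linear_combination (norm := module) e3 - e1
  have key2 : ∀ (z : g1) (x : g1), b11 z (b01 (b11 x x) x) = 0 := by
    intro z x
    rw [hsymm]
    have e1 := hJ011 (b11 x x) x z
    have e2 := hJ111 x x z
    rw [hsymm z x] at e2
    have e3 := hJ011 (b11 x z) x x
    have ha := hanti (b11 x z) (b11 x x)
    have e2' : b01 (b11 x x) z = -(b01 (b11 x z) x + b01 (b11 x z) x) := by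
      linear_combination (norm := module) e2
    rw [e2', map_neg, map_add, LinearMap.neg_apply, LinearMap.add_apply] at e1
    linear_combination (norm := module) e1 + e3 + ha
  refine ⟨?_, ?_, fun x => Submodule.subset_span ⟨x, rfl⟩⟩
  · intro a y hy
    have hle : Submodule.span K {w : g1 | ∃ x : g1, w = b01 (b11 x x) x} ≤
        LinearMap.ker (b01 a) := by
      rw [Submodule.span_le]
      rintro w ⟨x, rfl⟩
      exact LinearMap.mem_ker.mpr (key0 a x)
    exact LinearMap.mem_ker.mp (hle hy)
  · intro z y hy
    have hle : Submodule.span K {w : g1 | ∃ x : g1, w = b01 (b11 x x) x} ≤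
        LinearMap.ker (b11 z) := by
      rw [Submodule.span_le]
      rintro w ⟨x, rfl⟩
      exact LinearMap.mem_ker.mpr (key2 z x)
    exact LinearMap.mem_ker.mp (hle hy)
end
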